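/- arXiv:2312.13525 — 2 statements merged into one kernel-verified Lean document; each statement's English description precedes it below -/
import Mathlib

section
/- For every z ∈ M, positive integer k, and integer n ≥ 1, the identity n · s_{z^n,k} s_{z^{n−1},k} ⋯ s_{z,k} = Σ_{i=1}^{n} s_{z^i, ik} ∗ (s_{z^{n−i},k} ⋯ s_{z,k}) holds in the harmonic algebra 𝔥_{M,∗}, where on the left the factors are multiplied by concatenation and ∗ denotes the harmonic product. -/
open scoped BigOperators

/-- `𝔥_M`: the noncommutative polynomial ring `ℚ⟨e_z : z ∈ M⟩`, realized as the
monoid algebra of the free monoid on `M` over `ℚ` (concatenation product). -/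
abbrev H (M : Type*) [MonoidWithZero M] : Type _ := MonoidAlgebra ℚ (FreeMonoid M)

variable {M : Type*} [MonoidWithZero M]

/-- The word `e_{a_1} ⋯ e_{a_k}` as an element of `𝔥_M`. -/
noncomputable def wrd (l : List M) : H M := MonoidAlgebra.single (FreeMonoid.ofList l) 1

/-- The generator `e_z`. -/
noncomputable def e (z : M) : H M := wrd [z]

/-- The harmonic product on words, defined by the recursion
`e_a w ∗ e_b w' = e_{ab}(w ∗ e_b w' + e_a w ∗ w' − e_0 (w ∗ w'))`. -/
noncomputable def har : List M → List M → H M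
  | [], w => wrd w
  | a :: w, [] => wrd (a :: w)
  | a :: w, b :: w' =>
      wrd [a * b] * (har w (b :: w') + har (a :: w) w' - wrd [0] * har w w')
termination_by w w' => w.length + w'.length
decreasing_by all_goals (simp; try omega)

/-- The harmonic product `∗` on `𝔥_M`, extended ℚ-bilinearly from words. -/
noncomputable def hmul (f g : H M) : H M :=
  Finsupp.sum f.coeff fun w a => Finsupp.sum g.coeff fun w' b =>
    (a * b) • har (FreeMonoid.toList w) (FreeMonoid.toList w')

/-- Powers with respect to the harmonic product. -/
noncomputable def hpow (a : H M) : ℕ → H M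
  | 0 => 1
  | n + 1 => hmul a (hpow a n)

/-- `s_{z,k} = e_z e_0^{k-1}` (concatenation product). -/
noncomputable def s (z : M) (k : ℕ) : H M := e z * (e 0) ^ (k - 1)

/-- `sprod z k n = s_{z^n,k} s_{z^{n-1},k} ⋯ s_{z,k}` (concatenation), `sprod z k 0 = 1`. -/
noncomputable def sprod (z : M) (k : ℕ) : ℕ → H M
  | 0 => 1
  | n + 1 => s (z ^ (n + 1)) k * sprod z k n

/-- Cauchy product of power series over `(𝔥_M, ∗)`, represented as coefficient sequences. -/
noncomputable def hmulPS (f g : ℕ → H M) : ℕ → H M :=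
  fun n => ∑ i ∈ Finset.range (n + 1), hmul (f i) (g (n - i))

/-- Powers of a power series w.r.t. the harmonic product. -/
noncomputable def psPow (f : ℕ → H M) : ℕ → (ℕ → H M)
  | 0 => fun n => if n = 0 then 1 else 0
  | m + 1 => hmulPS f (psPow f m)

/-- `exp_∗` of a power series with zero constant term (coefficientwise). -/
noncomputable def expPS (f : ℕ → H M) : ℕ → H M :=
  fun n => ∑ m ∈ Finset.range (n + 1), ((Nat.factorial m : ℚ))⁻¹ • psPow f m n

/-- Coefficients of the formal sine `S_z(x) = Σ_{n≥0} s_{z^n,2}⋯s_{z,2} x^{2n+1}`. -/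
noncomputable def Scoef (z : M) (d : ℕ) : H M :=
  if d % 2 = 1 then sprod z 2 (d / 2) else 0

/-- Coefficients of the formal cosine `C_z(x) = S_z'(x)`. -/
noncomputable def Ccoef (z : M) (d : ℕ) : H M := ((d : ℚ) + 1) • Scoef z (d + 1)

/-- `w_{z,n} = (2n+1)! s_{z^n,2} ⋯ s_{z,2}`. -/
noncomputable def wz (z : M) (n : ℕ) : H M := ((Nat.factorial (2 * n + 1) : ℚ)) • sprod z 2 n

/-- `g_{z,m,n} = w_{z,m+n} − w_{z,m} ∗ w_{z,n}`. -/
noncomputable def gz (z : M) (m n : ℕ) : H M := wz z (m + n) - hmul (wz z m) (wz z n)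

/-- Coefficient of `x^i y^j` in `A_z(x,y) = S_z(x+y) − S_z(x) ∗ C_z(y) − C_z(x) ∗ S_z(y)`. -/
noncomputable def Acoef (z : M) (i j : ℕ) : H M :=
  (Nat.choose (i + j) i : ℚ) • Scoef z (i + j)
    - hmul (Scoef z i) (Ccoef z j) - hmul (Ccoef z i) (Scoef z j)

/-- Coefficient of `x^d` in `P_z(x) = −w_{z,1} ∗ S_z(x)^{∗2} + C_z(x)^{∗2}`. -/
noncomputable def Pcoef (z : M) (d : ℕ) : H M :=
  -(hmul (wz z 1) (hmulPS (Scoef z) (Scoef z) d)) + hmulPS (Ccoef z) (Ccoef z) d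


/-- Coefficients of `S^T_{z,k}(x) = Σ_{n≥0} s_{z^n,k}⋯s_{z,k} x^{(n+1)k−1}`. -/
noncomputable def STcoef (z : M) (k : ℕ) (d : ℕ) : H M :=
  if k ∣ (d + 1) then sprod z k ((d + 1) / k - 1) else 0

/-- Coefficients of the series `Σ_{n≥1} (s_{z^n,nk}/n) x^{nk}`. -/
noncomputable def gexp (z : M) (k : ℕ) (d : ℕ) : H M :=
  if d ≠ 0 ∧ k ∣ d then (((d / k : ℕ) : ℚ))⁻¹ • s (z ^ (d / k)) d else 0

/-- Coefficients of `S^R_{z,k}(x) = x^{k−1} exp_∗(Σ_{n≥1} (s_{z^n,nk}/n) x^{nk})`. -/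
noncomputable def SRcoef (z : M) (k : ℕ) (d : ℕ) : H M :=
  if k - 1 ≤ d then expPS (gexp z k) (d - (k - 1)) else 0

/-- Admissible words spanning `𝔥^0_M = ℚ ⊕ ⨁_{a≠0,1} 𝔥_M e_a ⊕ ⨁_{a≠0,b≠1} e_a 𝔥_M e_b`. -/
def adm0 (l : List M) : Prop :=
  l = [] ∨ ∃ h : l ≠ [],
    (l.getLast h ≠ 0 ∧ l.getLast h ≠ 1) ∨ (l.head h ≠ 0 ∧ l.getLast h ≠ 1)

/-- The subspace `𝔥^0_M`. -/
noncomputable def H0 (M : Type*) [MonoidWithZero M] : Submodule ℚ (H M) :=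
  Submodule.span ℚ {x | ∃ l : List M, adm0 l ∧ x = wrd l}

/-- Words spanning `𝔥^1_M = ⨁_{m≥0} 𝔥^0_M e_1^m`. -/
def adm1 (l : List M) : Prop :=
  ∃ (l₀ : List M) (m : ℕ), adm0 l₀ ∧ l = l₀ ++ List.replicate m 1

/-- The subspace `𝔥^1_M`. -/
noncomputable def H1 (M : Type*) [MonoidWithZero M] : Submodule ℚ (H M) :=
  Submodule.span ℚ {x | ∃ l : List M, adm1 l ∧ x = wrd l}

/-- `ℓ(w)`: the number of letters `e_a` of a word with `a ≠ 0`. -/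
noncomputable def lcount (l : List M) : ℕ :=
  l.countP fun a => @decide (a ≠ 0) (Classical.propDecidable _)

/-- `ℱ_d 𝔥^0_M`: span of admissible words `w` with `ℓ(w) ≤ d`. -/
noncomputable def F0 (M : Type*) [MonoidWithZero M] (d : ℕ) : Submodule ℚ (H M) :=
  Submodule.span ℚ {x | ∃ l : List M, adm0 l ∧ lcount l ≤ d ∧ x = wrd l}

/-- The ideal of `(𝔥_M, ∗)` generated by a set. -/
noncomputable def genIdeal (S : Set (H M)) : Submodule ℚ (H M) :=
  Submodule.span ℚ {x | ∃ a y, y ∈ S ∧ x = hmul a y}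

/-- The product on the polynomial ring `𝔥_{M,∗}[S,T]` (represented as
finitely supported coefficient families indexed by monomials `S^i T^j`). -/
noncomputable def polyMul2 (f g : (ℕ × ℕ) →₀ H M) : (ℕ × ℕ) →₀ H M :=
  Finsupp.sum f fun p a => Finsupp.sum g fun q b => Finsupp.single (p + q) (hmul a b)

/-- `φ : 𝔥^0_{M,∗}[S,T] → 𝔥_{M,∗}`, `Σ w_{ij} S^i T^j ↦ Σ w_{ij} ∗ e_0^{∗i} ∗ e_1^{∗j}`. -/
noncomputable def phi2 (f : (ℕ × ℕ) →₀ H M) : H M :=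
  Finsupp.sum f fun p a => hmul a (hmul (hpow (e 0) p.1) (hpow (e 1) p.2))

/-- The product on `𝔥_{M,∗}[S]`. -/
noncomputable def polyMul1 (f g : ℕ →₀ H M) : ℕ →₀ H M :=
  Finsupp.sum f fun p a => Finsupp.sum g fun q b => Finsupp.single (p + q) (hmul a b)

/-- `φ₁ : 𝔥^1_{M,∗}[S] → 𝔥_{M,∗}`, `Σ w_i S^i ↦ Σ w_i ∗ e_0^{∗i}`. -/
noncomputable def phi1 (f : ℕ →₀ H M) : H M :=
  Finsupp.sum f fun i a => hmul a (hpow (e 0) i)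


/-!
Letters `e_0` factor out of the harmonic product (`e_0 u ∗ w = e_0 (u ∗ w)`), so the defining
recursion gives, for `p, k ≥ 1`,
`s_{x,p} ∗ s_{y,k} w = e_{xy} (e_0^{p-1} s_{y,k} w + e_0^{k-1} (s_{x,p} ∗ w) - e_0^{p+k-1} w)`.
Taking `x = z^i`, `p = ik`, `s_{y,k} w = s_{z^{n-i},k} ⋯ s_{z,k}` and summing over `i`, the first and
last terms telescope to `e_0^{k-1} s_{z^{n-1},k} ⋯ s_{z,k}`, while the middle terms contribute
`(n - 1)` times the same word by induction on `n`; the common prefix `e_{z^n}` turns this into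
`n · s_{z^n,k} ⋯ s_{z,k}`.
-/

lemma wrd_append (u w : List M) : wrd (u ++ w) = wrd u * wrd w := by
  simp [wrd, MonoidAlgebra.single_mul_single, FreeMonoid.ofList_append]

lemma wrd_cons (a : M) (w : List M) : wrd (a :: w) = e a * wrd w :=
  wrd_append [a] w

lemma wrd_replicate_zero (p : ℕ) : wrd (List.replicate p (0 : M)) = e 0 ^ p := by
  induction p with
  | zero => rfl
  | succ p ih => rw [List.replicate_succ', wrd_append, ih, pow_succ]; rfl

lemma hmul_wrd_wrd (u w : List M) : hmul (wrd u) (wrd w) = har u w := by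
  rw [hmul, wrd, wrd, MonoidAlgebra.coeff_single, MonoidAlgebra.coeff_single,
    Finsupp.sum_single_index, Finsupp.sum_single_index]
  · simp [FreeMonoid.toList_ofList]
  · simp
  · simp [Finsupp.sum]

lemma har_nil_right (u : List M) : har u [] = wrd u := by
  cases u <;> rw [har]

lemma har_zero_cons_left (u w : List M) : har (0 :: u) w = e 0 * har u w := by
  induction w with
  | nil => rw [har_nil_right, har_nil_right, wrd_cons]
  | cons b w ih => rw [har, ih, zero_mul, e, add_sub_cancel_right]

lemma har_zero_cons_right (u w : List M) : har u (0 :: w) = e 0 * har u w := by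
  induction u with
  | nil => rw [har, har, wrd_cons]
  | cons a u ih => rw [har, ih, mul_zero, e, add_sub_cancel_left]

lemma har_replicate_zero_append_left (p : ℕ) (u w : List M) :
    har (List.replicate p 0 ++ u) w = e 0 ^ p * har u w := by
  induction p with
  | zero => simp
  | succ p ih =>
    rw [List.replicate_succ, List.cons_append, har_zero_cons_left, ih, pow_succ', mul_assoc]

lemma har_replicate_zero_append_right (q : ℕ) (u w : List M) :
    har u (List.replicate q 0 ++ w) = e 0 ^ q * har u w := by
  induction q with
  | zero => simp
  | succ q ih =>
    rw [List.replicate_succ, List.cons_append, har_zero_cons_right, ih, pow_succ', mul_assoc]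

lemma har_replicate_zero_left (p : ℕ) (w : List M) :
    har (List.replicate p 0) w = e 0 ^ p * wrd w := by
  simpa [har] using har_replicate_zero_append_left p [] w

lemma har_cons_replicate_zero_cons (x y : M) (p q : ℕ) (w : List M) :
    har (x :: List.replicate p 0) (y :: (List.replicate q 0 ++ w)) =
      e (x * y) * (e 0 ^ p * wrd (y :: (List.replicate q 0 ++ w))
        + e 0 ^ q * har (x :: List.replicate p 0) w - e 0 ^ (p + q + 1) * wrd w) := by
  rw [har, har_replicate_zero_left, har_replicate_zero_append_right, har_replicate_zero_left,
    wrd_append, wrd_replicate_zero, pow_succ', pow_add, ← e, ← e]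
  noncomm_ring

def sprodWord (z : M) (k : ℕ) : ℕ → List M
  | 0 => []
  | n + 1 => z ^ (n + 1) :: (List.replicate (k - 1) 0 ++ sprodWord z k n)

lemma s_eq_wrd (a : M) (k : ℕ) : s a k = wrd (a :: List.replicate (k - 1) 0) := by
  rw [s, wrd_cons, wrd_replicate_zero]

lemma sprod_eq_wrd (z : M) (k : ℕ) : ∀ n, sprod z k n = wrd (sprodWord z k n)
  | 0 => rfl
  | n + 1 => by
    rw [sprod, sprod_eq_wrd z k n, sprodWord, s_eq_wrd, ← wrd_append, List.cons_append]

lemma hmul_s_one (a : M) (k : ℕ) : hmul (s a k) 1 = s a k := by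
  rw [s_eq_wrd, show (1 : H M) = wrd [] from rfl, hmul_wrd_wrd, har_nil_right]

lemma hmul_s_sprod_succ (x z : M) {p k : ℕ} (hp : 1 ≤ p) (hk : 1 ≤ k) (m : ℕ) :
    hmul (s x p) (sprod z k (m + 1)) =
      e (x * z ^ (m + 1)) * (e 0 ^ (p - 1) * sprod z k (m + 1)
        + e 0 ^ (k - 1) * hmul (s x p) (sprod z k m) - e 0 ^ (p + k - 1) * sprod z k m) := by
  simp only [s_eq_wrd, sprod_eq_wrd, hmul_wrd_wrd, sprodWord]
  rw [har_cons_replicate_zero_cons, show p - 1 + (k - 1) + 1 = p + k - 1 by omega]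

lemma sum_Icc_e0_pow_mul_sprod_sub (z : M) (k n : ℕ) :
    ∑ i ∈ Finset.Icc 1 n, (e 0 ^ (i * k - 1) * sprod z k (n + 1 - i)
        - e 0 ^ ((i + 1) * k - 1) * sprod z k (n - i)) =
      e 0 ^ (k - 1) * sprod z k n - e 0 ^ ((n + 1) * k - 1) := by
  set g : ℕ → H M := fun i => e 0 ^ (i * k - 1) * sprod z k (n + 1 - i)
  have hg : ∀ i ∈ Finset.Icc 1 n, e 0 ^ (i * k - 1) * sprod z k (n + 1 - i)
      - e 0 ^ ((i + 1) * k - 1) * sprod z k (n - i) = -(g (i + 1) - g i) := by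
    intro i _
    simp only [g, Nat.add_sub_add_right, neg_sub]
  rw [Finset.sum_congr rfl hg, Finset.sum_neg_distrib, ← Finset.Ico_add_one_right_eq_Icc,
    Finset.sum_Ico_sub g (by omega)]
  simp [g, sprod]

lemma sum_Icc_hmul_s_sprod_succ (z : M) {k : ℕ} (hk : 1 ≤ k) (n : ℕ) :
    ∑ i ∈ Finset.Icc 1 n, hmul (s (z ^ i) (i * k)) (sprod z k (n + 1 - i)) =
      e (z ^ (n + 1)) * (e 0 ^ (k - 1) * sprod z k n - e 0 ^ ((n + 1) * k - 1)
        + e 0 ^ (k - 1) * ∑ i ∈ Finset.Icc 1 n, hmul (s (z ^ i) (i * k)) (sprod z k (n - i))) := by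
  rw [← sum_Icc_e0_pow_mul_sprod_sub, Finset.mul_sum, ← Finset.sum_add_distrib, Finset.mul_sum]
  refine Finset.sum_congr rfl fun i hi => ?_
  obtain ⟨hi1, hin⟩ := Finset.mem_Icc.mp hi
  obtain ⟨m, rfl⟩ : ∃ m, n = i + m := ⟨n - i, by omega⟩
  have hik : 1 ≤ i * k := Nat.mul_le_mul hi1 hk
  rw [show i + m + 1 - i = m + 1 by omega, show i + m - i = m by omega,
    hmul_s_sprod_succ _ _ hik hk, ← pow_add, show i + (m + 1) = i + m + 1 by omega,
    show i * k + k - 1 = (i + 1) * k - 1 by rw [add_mul, one_mul]]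
  noncomm_ring

theorem key_identity_general (M : Type*) [MonoidWithZero M] (z : M) (k n : ℕ)
    (hk : 1 ≤ k) :
    (n : ℚ) • sprod z k n =
      ∑ i ∈ Finset.Icc 1 n, hmul (s (z ^ i) (i * k)) (sprod z k (n - i)) := by
  induction n with
  | zero => simp
  | succ n ih =>
    rw [Finset.sum_Icc_succ_top (by omega), Nat.sub_self, sum_Icc_hmul_s_sprod_succ z hk, ← ih,
      sprod, hmul_s_one]
    simp only [sprod, s, mul_add, mul_sub, mul_smul_comm, mul_assoc]
    push_cast
    module

/-- `n · s_{z^n,k}⋯s_{z,k} = Σ_{i=1}^n s_{z^i,ik} ∗ (s_{z^{n−i},k}⋯s_{z,k})`. -/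
theorem key_identity (M : Type*) [MonoidWithZero M] (z : M) (k n : ℕ)
    (hk : 1 ≤ k) (hn : 1 ≤ n) :
    (n : ℚ) • sprod z k n =
      ∑ i ∈ Finset.Icc 1 n, hmul (s (z ^ i) (i * k)) (sprod z k (n - i)) :=
  key_identity_general M z k n hk
end

section
/- Let z ∈ M and I an ideal of 𝔥_{M,∗}. Then I contains the ideal AP_z (i.e., I is AP_z-ample) if and only if the modified addition formula S_z(x+y) = S_z(x) ∗ C_z(y) + C_z(x) ∗ S_z(y) holds in (𝔥_{M,∗}/I)⟦x,y⟧. -/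
open scoped BigOperators

variable {M : Type*} [MonoidWithZero M]

/-! Only the coefficients of `x^i y^j` with `i + j` odd survive in
`A_z = S_z(x+y) − S_z(x) ∗ C_z(y) − C_z(x) ∗ S_z(y)`; for those, the factor `(2n+1)!` in
`w_{z,n}` and `binom(i+j, i) = (i+j)! / (i! j!)` give `A_{i,j} = g_{z,⌊i/2⌋,⌊j/2⌋} / (i! j!)`. So every coefficient of `A_z` is a rational multiple
of a generator of `AP_z`, and every generator is a nonzero multiple of a coefficient. -/

open scoped Nat

lemma hmul_zero_left (g : H M) : hmul 0 g = 0 := by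
  simp [hmul]

lemma hmul_zero_right (f : H M) : hmul f 0 = 0 := by
  simp [hmul]

lemma hmul_smul_left (c : ℚ) (f g : H M) : hmul (c • f) g = c • hmul f g := by
  unfold hmul
  rw [MonoidAlgebra.coeff_smul, Finsupp.smul_sum, Finsupp.sum_smul_index' (by simp)]
  refine Finsupp.sum_congr fun w _ => ?_
  rw [Finsupp.smul_sum]
  refine Finsupp.sum_congr fun w' _ => ?_
  rw [smul_smul, smul_eq_mul, mul_assoc]

lemma hmul_smul_right (c : ℚ) (f g : H M) : hmul f (c • g) = c • hmul f g := by
  unfold hmul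
  rw [Finsupp.smul_sum]
  refine Finsupp.sum_congr fun w a => ?_
  rw [MonoidAlgebra.coeff_smul, Finsupp.smul_sum, Finsupp.sum_smul_index' (by simp)]
  refine Finsupp.sum_congr fun w' _ => ?_
  rw [smul_smul, smul_eq_mul, mul_left_comm]

lemma hmul_one_left (g : H M) : hmul 1 g = g := by
  unfold hmul
  rw [show (1 : H M).coeff = Finsupp.single 1 1 from rfl, Finsupp.sum_single_index (by simp)]
  conv_rhs => rw [← MonoidAlgebra.sum_coeff_single g]
  refine Finsupp.sum_congr fun w _ => ?_
  simp [har, wrd]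

lemma mem_genIdeal {S : Set (H M)} {x : H M} (hx : x ∈ S) : x ∈ genIdeal S :=
  Submodule.subset_span ⟨1, x, hx, (hmul_one_left x).symm⟩

lemma genIdeal_le_iff {S : Set (H M)} {I : Submodule ℚ (H M)}
    (hI : ∀ a b : H M, b ∈ I → hmul a b ∈ I) : genIdeal S ≤ I ↔ S ⊆ I := by
  refine ⟨fun hle x hx => hle (mem_genIdeal hx), fun hS => ?_⟩
  rw [genIdeal, Submodule.span_le]
  rintro _ ⟨a, y, hy, rfl⟩
  exact hI a y (hS hy)

section Coefficients

variable (z : M) {d : ℕ}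

lemma Scoef_of_even (hd : Even d) : Scoef z d = 0 := by
  simp [Scoef, Nat.even_iff.mp hd]

lemma Scoef_of_odd (hd : Odd d) : Scoef z d = sprod z 2 (d / 2) := by
  simp [Scoef, Nat.odd_iff.mp hd]

lemma Ccoef_of_odd (hd : Odd d) : Ccoef z d = 0 := by
  rw [Ccoef, Scoef_of_even z hd.add_one, smul_zero]

lemma Ccoef_of_even (hd : Even d) : Ccoef z d = ((d : ℚ) + 1) • sprod z 2 (d / 2) := by
  have : (d + 1) / 2 = d / 2 := by have := Nat.even_iff.mp hd; omega
  rw [Ccoef, Scoef_of_odd z hd.add_one, this]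

lemma gz_eq_sprod (m n : ℕ) :
    gz z m n = ((2 * (m + n) + 1)! : ℚ) • sprod z 2 (m + n)
      - ((2 * m + 1)! * (2 * n + 1)! : ℚ) • hmul (sprod z 2 m) (sprod z 2 n) := by
  rw [gz, wz, wz, wz, hmul_smul_left, hmul_smul_right, smul_smul, mul_comm]

lemma Acoef_of_even_add {i j : ℕ} (h : Even (i + j)) : Acoef z i j = 0 := by
  by_cases hi : Even i
  · have hj : Even j := (Nat.even_add.mp h).mp hi
    simp [Acoef, Scoef_of_even z h, Scoef_of_even z hi, Scoef_of_even z hj,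
      hmul_zero_left, hmul_zero_right]
  · have hj : Odd j := Nat.not_even_iff_odd.mp fun hj => hi ((Nat.even_add.mp h).mpr hj)
    rw [Nat.not_even_iff_odd] at hi
    simp [Acoef, Scoef_of_even z h, Ccoef_of_odd z hi, Ccoef_of_odd z hj,
      hmul_zero_left, hmul_zero_right]

lemma inv_smul_gz {m n a b : ℕ} (hab : a + b = 2 * (m + n) + 1) {c : ℚ}
    (hc : c * (a ! * b !) = (2 * m + 1)! * (2 * n + 1)!) :
    ((a ! * b ! : ℚ))⁻¹ • gz z m n
      = ((a + b).choose a : ℚ) • sprod z 2 (m + n) - c • hmul (sprod z 2 m) (sprod z 2 n) := by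
  rw [gz_eq_sprod, smul_sub, smul_smul, smul_smul, Nat.cast_add_choose, hab, ← hc]
  congr 2 <;> field_simp

lemma Acoef_of_odd_add {i j : ℕ} (h : Odd (i + j)) :
    Acoef z i j = ((i ! * j ! : ℚ))⁻¹ • gz z (i / 2) (j / 2) := by
  obtain ⟨m, rfl | rfl⟩ := Nat.even_or_odd' i <;> obtain ⟨n, rfl | rfl⟩ := Nat.even_or_odd' j
  · exact absurd h (by simp [parity_simps])
  · have hm : 2 * m / 2 = m := by omega
    have hn : (2 * n + 1) / 2 = n := by omega
    have hmn : (2 * m + (2 * n + 1)) / 2 = m + n := by omega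
    rw [Acoef, Scoef_of_odd z h, Scoef_of_even z (even_two_mul m),
      Ccoef_of_odd z (odd_two_mul_add_one n), Ccoef_of_even z (even_two_mul m),
      Scoef_of_odd z (odd_two_mul_add_one n), hm, hn, hmn, hmul_zero_left, hmul_smul_left,
      sub_zero, inv_smul_gz z (by ring)]
    push_cast [Nat.factorial_succ]
    ring
  · have hm : (2 * m + 1) / 2 = m := by omega
    have hn : 2 * n / 2 = n := by omega
    have hmn : (2 * m + 1 + 2 * n) / 2 = m + n := by omega
    rw [Acoef, Scoef_of_odd z h, Scoef_of_odd z (odd_two_mul_add_one m),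
      Ccoef_of_even z (even_two_mul n), Ccoef_of_odd z (odd_two_mul_add_one m),
      Scoef_of_even z (even_two_mul n), hm, hn, hmn, hmul_zero_left, hmul_smul_right,
      sub_zero, inv_smul_gz z (by ring)]
    push_cast [Nat.factorial_succ]
    ring
  · exact absurd h (by simp [parity_simps])

lemma gz_eq_smul_Acoef (m n : ℕ) :
    gz z m n = ((2 * m)! * (2 * n + 1)! : ℚ) • Acoef z (2 * m) (2 * n + 1) := by
  have h : Odd (2 * m + (2 * n + 1)) := ⟨m + n, by ring⟩
  have hm : 2 * m / 2 = m := by omega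
  have hn : (2 * n + 1) / 2 = n := by omega
  rw [Acoef_of_odd_add z h, smul_smul, mul_inv_cancel₀ (by positivity), one_smul, hm, hn]

end Coefficients

/-- Theorem 3.1: an ideal `I` of `𝔥_{M,∗}` is `AP_z`-ample iff the modified addition
formula `S_z(x+y) = S_z(x) ∗ C_z(y) + C_z(x) ∗ S_z(y)` holds in `(𝔥_{M,∗}/I)⟦x,y⟧`
(i.e. all coefficients of `A_z(x,y)` lie in `I`). -/
theorem addition_formula_iff_ample (M : Type*) [MonoidWithZero M] (z : M)
    (I : Submodule ℚ (H M)) (hI : ∀ a b : H M, b ∈ I → hmul a b ∈ I) :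
    genIdeal {x : H M | ∃ m n : ℕ, x = gz z m n} ≤ I ↔
      ∀ i j : ℕ, Acoef z i j ∈ I := by
  rw [genIdeal_le_iff hI]
  constructor
  · intro hg i j
    rcases Nat.even_or_odd (i + j) with h | h
    · rw [Acoef_of_even_add z h]
      exact I.zero_mem
    · rw [Acoef_of_odd_add z h]
      exact I.smul_mem _ (hg ⟨_, _, rfl⟩)
  · rintro hA _ ⟨m, n, rfl⟩
    rw [gz_eq_smul_Acoef]
    exact I.smul_mem _ (hA _ _)
end
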